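/- arXiv:2305.02497 — 2 statements merged into one kernel-verified Lean document; each statement's English description precedes it below -/
import Mathlib

section
/- For a ∈ [0,1] and x > 0 and w ∈ [0,1/4], the inequality ((w−1)/2)(exp((w−1)x) + exp((1−w)x)) + (2ax − 2x − 1)·w − a + 1 ≤ −a − 2(1−a)·w·x holds. -/
theorem deriv_bound_ineq_general (a x w : ℝ)
    (hw1 : w ≤ 1 / 4) :
    (w - 1) / 2 * (Real.exp ((w - 1) * x) + Real.exp ((1 - w) * x)) +
        (2 * a * x - 2 * x - 1) * w - a + 1 ≤
      -a - 2 * (1 - a) * w * x := by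
  have hcosh :
      Real.exp ((w - 1) * x) + Real.exp ((1 - w) * x) = 2 * Real.cosh ((1 - w) * x) := by
    rw [Real.cosh_eq, show -((1 - w) * x) = (w - 1) * x by ring]
    ring
  calc (w - 1) / 2 * (Real.exp ((w - 1) * x) + Real.exp ((1 - w) * x)) +
          (2 * a * x - 2 * x - 1) * w - a + 1
        = -a - 2 * (1 - a) * w * x + (1 - w) * (1 - Real.cosh ((1 - w) * x)) := by
          rw [hcosh]; ring
    _ ≤ -a - 2 * (1 - a) * w * x :=
          add_le_of_nonpos_right <|
            mul_nonpos_of_nonneg_of_nonpos (by linarith) (sub_nonpos.2 (Real.one_le_cosh _))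

theorem deriv_bound_ineq (a x w : ℝ) (ha0 : 0 ≤ a) (ha1 : a ≤ 1)
    (hx : 0 < x) (hw0 : 0 ≤ w) (hw1 : w ≤ 1 / 4) :
    (w - 1) / 2 * (Real.exp ((w - 1) * x) + Real.exp ((1 - w) * x)) +
        (2 * a * x - 2 * x - 1) * w - a + 1 ≤
      -a - 2 * (1 - a) * w * x :=
  deriv_bound_ineq_general a x w hw1
end

section
/- Define g(a) = (3.2−a)/(1.2+a) − (exp(2/(a+1.2)) − exp(−2/(a+1.2)))/2 for real a ∈ [0, 0.8]. Then g(a) > 0.02 for all a ∈ [0, 0.8]. -/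
/-!
With `x = 2 / (a + 1.2) ∈ [1, 5/3]` one has `g a = 2.2 x - 1 - sinh x`. Since `sinh` is convex
on `[0, ∞)`, this is concave in `x`, so it is bounded below by its values at the endpoints,
`1.2 - sinh 1 ≈ 0.0248` and `8/3 - sinh (5/3) ≈ 0.102`.
-/

noncomputable def g (a : ℝ) : ℝ :=
  (3.2 - a) / (1.2 + a) -
    (Real.exp (2 / (a + 1.2)) - Real.exp (-(2 / (a + 1.2)))) / 2

open Real Set

theorem Real.convexOn_sinh_Ici : ConvexOn ℝ (Ici 0) sinh := by
  refine MonotoneOn.convexOn_of_deriv (convex_Ici 0) continuous_sinh.continuousOn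
    differentiable_sinh.differentiableOn ?_
  rw [deriv_sinh, interior_Ici]
  intro x hx y hy hxy
  rw [cosh_le_cosh, abs_of_pos hx, abs_of_pos hy]
  exact hxy

theorem Real.sinh_one_lt : sinh 1 < 1.18 := by
  have hinv : (0.3678 : ℝ) < exp (-1) := by
    rw [exp_neg, lt_inv_comm₀ (by norm_num) (exp_pos 1)]
    exact exp_one_lt_d9.trans (by norm_num)
  rw [sinh_eq]
  linarith [exp_one_lt_d9]

theorem Real.exp_five_thirds_lt : exp (5 / 3) < 5.3 := by
  have hcube : exp (5 / 3) ^ 3 = exp 1 ^ 5 := by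
    rw [← exp_nat_mul, ← exp_nat_mul]; norm_num
  refine lt_of_pow_lt_pow_left₀ 3 (by norm_num) ?_
  rw [hcube]
  calc exp 1 ^ 5 < 2.7182818286 ^ 5 := by gcongr; exact exp_one_lt_d9
    _ < 5.3 ^ 3 := by norm_num

theorem Real.sinh_five_thirds_lt : sinh (5 / 3) < 2.64 := by
  have hinv : (0.18 : ℝ) < exp (-(5 / 3)) := by
    rw [exp_neg, lt_inv_comm₀ (by norm_num) (exp_pos _)]
    exact exp_five_thirds_lt.trans (by norm_num)
  rw [sinh_eq]
  linarith [exp_five_thirds_lt]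

theorem Real.concaveOn_mul_sub_sub_sinh (c d : ℝ) :
    ConcaveOn ℝ (Ici 0) fun y ↦ c * y - d - sinh y :=
  (((LinearMap.mul ℝ ℝ c).concaveOn (convex_Ici 0)).add_const (-d)).sub convexOn_sinh_Ici

theorem g_eq_sub_sinh {a : ℝ} (ha : 0 < a + 1.2) :
    g a = 2.2 * (2 / (a + 1.2)) - 1 - sinh (2 / (a + 1.2)) := by
  rw [g, ← sinh_eq, add_comm 1.2 a]
  field_simp
  ring

theorem g_gt (a : ℝ) (ha0 : 0 ≤ a) (ha1 : a ≤ 0.8) : g a > 0.02 := by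
  have hpos : 0 < a + 1.2 := by linarith
  have hx_mem : 2 / (a + 1.2) ∈ segment ℝ (1 : ℝ) (5 / 3) := by
    rw [segment_eq_Icc (by norm_num)]
    constructor
    · rw [le_div_iff₀ hpos]; linarith
    · rw [div_le_iff₀ hpos]; linarith
  have hmin := (concaveOn_mul_sub_sub_sinh 2.2 1).ge_on_segment
    (by norm_num : (1 : ℝ) ∈ Ici 0) (by norm_num : (5 / 3 : ℝ) ∈ Ici 0) hx_mem
  rw [g_eq_sub_sinh hpos]
  refine lt_of_lt_of_le (lt_min ?_ ?_) hmin
  · linarith [sinh_one_lt]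
  · linarith [sinh_five_thirds_lt]
end
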